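/- Let H be a subgroup of G̃. Suppose there exist f, g ∈ H and real numbers a < b < b' such that f(a) = a, g(a) = a, f(b) = b, g(b') = b', (a, b) ⊆ supp(f) and (a, b') ⊆ supp(g). Then there exist f₁, g₁ ∈ H and real numbers b₁ < c₁ such that g₁(b₁) = b₁, f₁(c₁) = c₁, (b₁, c₁] ⊆ supp(g₁) and [b₁, c₁) ⊆ supp(f₁). -/

import Mathlib

noncomputable section

abbrev SL2Z := Matrix.SpecialLinearGroup (Fin 2) ℤ

/-- The Möbius action of `A ∈ SL(2, ℤ)` on `x ∈ ℝ`. -/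
def mobius (A : SL2Z) (x : ℝ) : ℝ :=
  ((A 0 0 : ℤ) * x + (A 0 1 : ℤ)) / ((A 1 0 : ℤ) * x + (A 1 1 : ℤ))

/-- The Möbius action of `A = !![a, b; c, d]` is defined at `x` if `c·x + d ≠ 0`. -/
def mobiusDefinedAt (A : SL2Z) (x : ℝ) : Prop :=
  ((A 1 0 : ℤ) : ℝ) * x + ((A 1 1 : ℤ) : ℝ) ≠ 0

/-- `x` is a fixed point of `A = !![a, b; c, d]` if `a·x + b = x·(c·x + d)`. -/
def IsFixedPt (A : SL2Z) (x : ℝ) : Prop :=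
  (A 0 0 : ℤ) * x + (A 0 1 : ℤ) = x * ((A 1 0 : ℤ) * x + (A 1 1 : ℤ))

/-- `A` is hyperbolic if `|a + d| > 2`. -/
def IsHyperbolic (A : SL2Z) : Prop := 2 < |A 0 0 + A 1 1|

/-- `P_ℤ` is the set of real fixed points of hyperbolic elements of SL(2, ℤ). -/
def PZ : Set ℝ := {x | ∃ A : SL2Z, IsHyperbolic A ∧ IsFixedPt A x}

/-- A real number is a quadratic irrational if it is irrational and of the form
`u + v·√k` with `u, v ∈ ℚ` and `k` a positive nonsquare integer. -/
def IsQuadIrr (s : ℝ) : Prop :=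
  Irrational s ∧
    ∃ (u v : ℚ) (k : ℕ), 0 < k ∧ ¬ IsSquare k ∧ s = (u : ℝ) + (v : ℝ) * Real.sqrt k

/-- `f` coincides on `S` with the (everywhere-defined) Möbius action of a single
element of SL(2, ℤ). -/
def MobiusLikeOn (f : ℝ → ℝ) (S : Set ℝ) : Prop :=
  ∃ A : SL2Z, ∀ y ∈ S, mobiusDefinedAt A y ∧ f y = mobius A y

/-- Membership in the group `G̃` of piecewise-`PSL₂(ℤ)` homeomorphisms of the line:
a strictly increasing bijection of `ℝ` which, off a finite set `B`, coincides on each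
connected component of `ℝ ∖ B` with the Möbius action of an element of SL(2, ℤ),
and which equals an integer translation near infinity. -/
def InGTilde (f : Equiv.Perm ℝ) : Prop :=
  StrictMono f ∧
  (∃ B : Finset ℝ, ∀ x : ℝ, x ∉ B →
    MobiusLikeOn f (connectedComponentIn ((↑B : Set ℝ)ᶜ) x)) ∧
  ∃ (n : ℤ) (M : ℝ), ∀ x : ℝ, M ≤ |x| → f x = x + (n : ℝ)

/-- `x` is a break point of `f` if `f` does not coincide with the Möbius action of a
single element of SL(2, ℤ) on any neighbourhood of `x`. -/
def IsBreakPt (f : ℝ → ℝ) (x : ℝ) : Prop :=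
  ¬ ∃ U ∈ nhds x, MobiusLikeOn f U

/-- Membership in Monod's group `H(ℤ)`: an element of `G̃` all of whose break points
lie in `P_ℤ`. -/
def InHZ (f : Equiv.Perm ℝ) : Prop :=
  InGTilde f ∧ ∀ x : ℝ, IsBreakPt f x → x ∈ PZ

/-- The orbit of `s` under the Möbius action of SL(2, ℤ) (where defined). -/
def orbitOf (s : ℝ) : Set ℝ :=
  {x | ∃ A : SL2Z, mobiusDefinedAt A s ∧ x = mobius A s}

/-!
Near a common fixed point `a`, elements of `G̃` are Möbius maps of matrices fixing `a`, and two
elements of SL(2, ℤ) with a common fixed point in ℝ commute. So if `γ ∈ {g, g⁻¹}` pushes `b` to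
the right, the commutator `c = f⁻¹ γ⁻¹ f γ` is the identity just to the right of `a`, whereas at
`x₀ = γ⁻¹ b` it takes the value `f⁻¹ x₀ ≠ x₀`. With `b₁` the last fixed point of `c` before `x₀`,
the pair `g₁ = c`, `f₁ = γ⁻¹ f γ` (which fixes `x₀` and moves every point of `(a, x₀)`) works.
-/

open Filter Topology

def mobiusNum (A : SL2Z) (x : ℝ) : ℝ := (A 0 0 : ℝ) * x + (A 0 1 : ℝ)

def mobiusDenom (A : SL2Z) (x : ℝ) : ℝ := (A 1 0 : ℝ) * x + (A 1 1 : ℝ)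

theorem mobius_eq_div (A : SL2Z) (x : ℝ) : mobius A x = mobiusNum A x / mobiusDenom A x := rfl

theorem mobiusDefinedAt_iff (A : SL2Z) (x : ℝ) : mobiusDefinedAt A x ↔ mobiusDenom A x ≠ 0 :=
  Iff.rfl

theorem isFixedPt_iff (A : SL2Z) (x : ℝ) : IsFixedPt A x ↔ mobiusNum A x = x * mobiusDenom A x :=
  Iff.rfl

theorem SL2Z.mul_apply (A B : SL2Z) (i j : Fin 2) :
    (A * B) i j = A i 0 * B 0 j + A i 1 * B 1 j := by
  simp [Matrix.SpecialLinearGroup.coe_mul, Matrix.mul_apply, Fin.sum_univ_two]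

theorem SL2Z.det_eq (A : SL2Z) : A 0 0 * A 1 1 - A 0 1 * A 1 0 = 1 := by
  have h := A.det_coe
  rwa [Matrix.det_fin_two] at h

theorem mobiusNum_mul (A B : SL2Z) (x : ℝ) :
    mobiusNum (A * B) x = A 0 0 * mobiusNum B x + A 0 1 * mobiusDenom B x := by
  simp only [mobiusNum, mobiusDenom, SL2Z.mul_apply]; push_cast; ring

theorem mobiusDenom_mul (A B : SL2Z) (x : ℝ) :
    mobiusDenom (A * B) x = A 1 0 * mobiusNum B x + A 1 1 * mobiusDenom B x := by
  simp only [mobiusNum, mobiusDenom, SL2Z.mul_apply]; push_cast; ring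

theorem mobius_mul {A B : SL2Z} {x : ℝ} (hB : mobiusDefinedAt B x)
    (hA : mobiusDefinedAt A (mobius B x)) :
    mobiusDefinedAt (A * B) x ∧ mobius (A * B) x = mobius A (mobius B x) := by
  have hnum : mobiusNum B x = mobius B x * mobiusDenom B x := (div_mul_cancel₀ _ hB).symm
  have hden : mobiusDenom (A * B) x = mobiusDenom A (mobius B x) * mobiusDenom B x := by
    rw [mobiusDenom_mul, hnum, mobiusDenom, mobiusDenom]; ring
  have hnum' : mobiusNum (A * B) x = mobiusNum A (mobius B x) * mobiusDenom B x := by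
    rw [mobiusNum_mul, hnum, mobiusNum, mobiusDenom]; ring
  refine ⟨(mobiusDefinedAt_iff _ _).2 (hden ▸ mul_ne_zero hA hB), ?_⟩
  rw [mobius_eq_div, hden, hnum', mul_div_mul_right _ _ ((mobiusDefinedAt_iff B x).1 hB)]
  rfl

theorem IsFixedPt.mul {A B : SL2Z} {x : ℝ} (hA : IsFixedPt A x) (hB : IsFixedPt B x) :
    IsFixedPt (A * B) x := by
  rw [isFixedPt_iff] at *
  rw [mobiusNum_mul, mobiusDenom_mul, hB]
  simp only [mobiusNum, mobiusDenom] at hA ⊢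
  linear_combination (B 1 0 * x + B 1 1 : ℝ) * hA

theorem mobiusDenom_mul_of_isFixedPt (A : SL2Z) {B : SL2Z} {x : ℝ} (hB : IsFixedPt B x) :
    mobiusDenom (A * B) x = mobiusDenom A x * mobiusDenom B x := by
  rw [mobiusDenom_mul, (isFixedPt_iff B x).1 hB, mobiusDenom, mobiusDenom]; ring

theorem Irrational.int_eq_zero_of_mul_add_eq_zero {x : ℝ} (hx : Irrational x) {m n : ℤ}
    (h : m * x + n = 0) : m = 0 ∧ n = 0 := by
  have hm : m = 0 := by
    by_contra hm
    exact ((hx.intCast_mul hm).add_intCast n).ne_zero h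
  subst hm
  simpa using h

theorem eq_of_isFixedPt_of_irrational {A B : SL2Z} {x : ℝ} (hx : Irrational x)
    (hA : IsFixedPt A x) (hB : IsFixedPt B x) (hAB : mobiusDenom A x = mobiusDenom B x) :
    A = B := by
  rw [isFixedPt_iff] at hA hB
  simp only [mobiusNum, mobiusDenom] at hA hB hAB
  obtain ⟨h10, h11⟩ := hx.int_eq_zero_of_mul_add_eq_zero (m := A 1 0 - B 1 0)
    (n := A 1 1 - B 1 1) (by push_cast; linear_combination hAB)
  obtain ⟨h00, h01⟩ := hx.int_eq_zero_of_mul_add_eq_zero (m := A 0 0 - B 0 0)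
    (n := A 0 1 - B 0 1) (by push_cast; linear_combination hA - hB + x * hAB)
  ext i j
  fin_cases i <;> fin_cases j <;> simp only [Fin.zero_eta, Fin.mk_one] <;> omega

theorem commute_of_isFixedPt_of_irrational {A B : SL2Z} {x : ℝ} (hx : Irrational x)
    (hA : IsFixedPt A x) (hB : IsFixedPt B x) : Commute A B :=
  eq_of_isFixedPt_of_irrational hx (hA.mul hB) (hB.mul hA) <| by
    rw [mobiusDenom_mul_of_isFixedPt A hB, mobiusDenom_mul_of_isFixedPt B hA, mul_comm]

/-- The stabiliser of `∞` consists of the matrices `±(1 n; 0 1)`. -/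
theorem commute_of_apply_one_zero_eq_zero {A B : SL2Z} (hA : A 1 0 = 0) (hB : B 1 0 = 0) :
    Commute A B := by
  have hdA := SL2Z.det_eq A
  have hdB := SL2Z.det_eq B
  rw [hA, mul_zero, sub_zero, Int.mul_eq_one_iff_eq_one_or_neg_one] at hdA
  rw [hB, mul_zero, sub_zero, Int.mul_eq_one_iff_eq_one_or_neg_one] at hdB
  ext i j
  fin_cases i <;> fin_cases j <;> simp only [Fin.zero_eta, Fin.mk_one, SL2Z.mul_apply, hA, hB] <;>
    rcases hdA with ⟨hA0, hA1⟩ | ⟨hA0, hA1⟩ <;> rcases hdB with ⟨hB0, hB1⟩ | ⟨hB0, hB1⟩ <;>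
    simp only [hA0, hA1, hB0, hB1] <;> ring

/-- `S` maps `∞` to `S 0 0 / S 1 0`, so conjugating by `S` moves a fixed point there to `∞`. -/
theorem conj_apply_one_zero_eq_zero_of_isFixedPt {A S : SL2Z} (hS : S 1 0 ≠ 0)
    (hA : IsFixedPt A ((S 0 0 : ℝ) / (S 1 0 : ℝ))) : (S⁻¹ * A * S) 1 0 = 0 := by
  have hS' : (S 1 0 : ℝ) ≠ 0 := by exact_mod_cast hS
  have hfix : S 1 0 * (A 0 0 * S 0 0 + A 0 1 * S 1 0)
      = S 0 0 * (A 1 0 * S 0 0 + A 1 1 * S 1 0) := by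
    unfold IsFixedPt at hA
    field_simp at hA
    rw [← @Int.cast_inj ℝ]
    push_cast
    linear_combination hA
  rw [SL2Z.mul_apply, SL2Z.mul_apply, SL2Z.mul_apply, Matrix.SpecialLinearGroup.SL2_inv_expl]
  simp only [Matrix.cons_val', Matrix.cons_val_zero, Matrix.cons_val_fin_one,
    Matrix.cons_val_one]
  linear_combination -hfix

theorem exists_SL2Z_apply_zero_eq {p q : ℤ} (h : IsCoprime p q) :
    ∃ S : SL2Z, S 0 0 = p ∧ S 1 0 = q := by
  obtain ⟨u, v, huv⟩ := h
  exact ⟨⟨!![p, -v; q, u], by rw [Matrix.det_fin_two_of]; linear_combination huv⟩, rfl, rfl⟩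

theorem commute_of_isFixedPt_of_rat {A B : SL2Z} {r : ℚ} (hA : IsFixedPt A r)
    (hB : IsFixedPt B r) : Commute A B := by
  obtain ⟨S, hS0, hS1⟩ := exists_SL2Z_apply_zero_eq r.isCoprime_num_den
  have hS : S 1 0 ≠ 0 := by rw [hS1]; exact_mod_cast r.den_ne_zero
  have hr : (r : ℝ) = (S 0 0 : ℝ) / (S 1 0 : ℝ) := by
    rw [hS0, hS1, Rat.cast_def]; push_cast; rfl
  rw [hr] at hA hB
  rw [← Commute.conj_iff S⁻¹, inv_inv]
  exact commute_of_apply_one_zero_eq_zero (conj_apply_one_zero_eq_zero_of_isFixedPt hS hA)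
    (conj_apply_one_zero_eq_zero_of_isFixedPt hS hB)

theorem commute_of_isFixedPt {A B : SL2Z} {x : ℝ} (hA : IsFixedPt A x) (hB : IsFixedPt B x) :
    Commute A B := by
  by_cases hx : x ∈ Set.range ((↑) : ℚ → ℝ)
  · obtain ⟨r, rfl⟩ := hx
    exact commute_of_isFixedPt_of_rat hA hB
  · exact commute_of_isFixedPt_of_irrational hx hA hB

def MobiusNearRight (f : ℝ → ℝ) (a : ℝ) (A : SL2Z) : Prop :=
  ∀ᶠ x in 𝓝[>] a, mobiusDefinedAt A x ∧ f x = mobius A x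

theorem MobiusNearRight.comp {f g : ℝ → ℝ} {a : ℝ} {A B : SL2Z} (hg : MobiusNearRight g a B)
    (hf : MobiusNearRight f a A) (hlim : Tendsto f (𝓝[>] a) (𝓝[>] a)) :
    MobiusNearRight (g ∘ f) a (B * A) := by
  filter_upwards [hf, hlim.eventually hg] with x ⟨hAx, hfx⟩ ⟨hBfx, hgfx⟩
  rw [hfx] at hBfx
  obtain ⟨hdef, hcomp⟩ := mobius_mul hAx hBfx
  exact ⟨hdef, by rw [Function.comp_apply, hgfx, hfx, hcomp]⟩

theorem MobiusNearRight.isFixedPt {f : ℝ → ℝ} {a : ℝ} {A : SL2Z} (h : MobiusNearRight f a A)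
    (hc : ContinuousAt f a) (ha : f a = a) : IsFixedPt A a := by
  have hnum : Continuous (mobiusNum A) := by unfold mobiusNum; fun_prop
  have hden : Continuous (mobiusDenom A) := by unfold mobiusDenom; fun_prop
  have hlim : Tendsto (fun x => f x * mobiusDenom A x) (𝓝[>] a) (𝓝 (a * mobiusDenom A a)) :=
    ((ha ▸ hc.tendsto).mul hden.continuousAt.tendsto).mono_left nhdsWithin_le_nhds
  refine tendsto_nhds_unique ?_ hlim
  refine (hnum.continuousAt.tendsto.mono_left nhdsWithin_le_nhds).congr' ?_
  filter_upwards [h] with x ⟨hx, hfx⟩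
  rw [hfx, mobius_eq_div, div_mul_cancel₀ _ ((mobiusDefinedAt_iff A x).1 hx)]

theorem InGTilde.continuous {f : Equiv.Perm ℝ} (hf : InGTilde f) : Continuous f :=
  hf.1.monotone.continuous_of_surjective f.surjective

theorem InGTilde.tendsto_nhdsGT {f : Equiv.Perm ℝ} (hf : InGTilde f) {a : ℝ} (ha : f a = a) :
    Tendsto f (𝓝[>] a) (𝓝[>] a) :=
  tendsto_nhdsWithin_iff.2 ⟨(hf.continuous.tendsto' a a ha).mono_left nhdsWithin_le_nhds,
    eventually_nhdsWithin_of_forall fun _ hx => ha ▸ hf.1 hx⟩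

theorem InGTilde.exists_mobiusNearRight {f : Equiv.Perm ℝ} (hf : InGTilde f) (a : ℝ) :
    ∃ A, MobiusNearRight f a A := by
  obtain ⟨-, ⟨B, hB⟩, -⟩ := hf
  have hBc : (B : Set ℝ)ᶜ ∈ 𝓝[>] a := by
    have := nhdsNE_of_nhdsNE_sdiff_finite (x := a) univ_mem B.finite_toSet
    rw [← Set.compl_eq_univ_sdiff] at this
    exact nhdsWithin_mono a (fun x hx => ne_of_gt hx) this
  obtain ⟨c, hac : a < c, hcB⟩ := mem_nhdsGT_iff_exists_Ioo_subset.1 hBc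
  have hmid : (a + c) / 2 ∈ Set.Ioo a c := ⟨by linarith, by linarith⟩
  obtain ⟨A, hA⟩ := hB _ (hcB hmid)
  have hcomp := isPreconnected_Ioo.subset_connectedComponentIn hmid hcB
  exact ⟨A, Filter.mem_of_superset (Ioo_mem_nhdsGT hac) fun x hx => hA x (hcomp hx)⟩

theorem InGTilde.eventually_comm_nhdsGT {f g : Equiv.Perm ℝ} (hf : InGTilde f) (hg : InGTilde g)
    {a : ℝ} (hfa : f a = a) (hga : g a = a) : ∀ᶠ x in 𝓝[>] a, f (g x) = g (f x) := by
  obtain ⟨A, hA⟩ := hf.exists_mobiusNearRight a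
  obtain ⟨B, hB⟩ := hg.exists_mobiusNearRight a
  have hAB : A * B = B * A := commute_of_isFixedPt
    (hA.isFixedPt hf.continuous.continuousAt hfa) (hB.isFixedPt hg.continuous.continuousAt hga)
  filter_upwards [hA.comp hB (hg.tendsto_nhdsGT hga), hB.comp hA (hf.tendsto_nhdsGT hfa)]
    with x hfg hgf
  simpa only [Function.comp_apply, hAB, ← hgf.2] using hfg.2

theorem exists_fixed_mem_Ico_forall_Ioc_ne {α : Type*} [ConditionallyCompleteLinearOrder α]
    [TopologicalSpace α] [OrderTopology α] {c : α → α} (hc : Continuous c) {q x : α}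
    (hq : c q = q) (hqx : q ≤ x) (hx : c x ≠ x) :
    ∃ b ∈ Set.Ico q x, c b = b ∧ ∀ y ∈ Set.Ioc b x, c y ≠ y := by
  set S := Set.Icc q x ∩ {y | c y = y}
  have hbdd : BddAbove S := ⟨x, fun y hy => hy.1.2⟩
  obtain ⟨⟨hqb, hbx⟩, hb⟩ : sSup S ∈ S :=
    (isClosed_Icc.inter (isClosed_eq hc continuous_id)).csSup_mem ⟨q, ⟨le_rfl, hqx⟩, hq⟩ hbdd
  refine ⟨sSup S, ⟨hqb, hbx.lt_of_ne fun h => hx (h ▸ hb)⟩, hb, fun y hy hcy => ?_⟩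
  exact hy.1.not_ge (le_csSup hbdd ⟨⟨hqb.trans hy.1.le, hy.2⟩, hcy⟩)

theorem Equiv.Perm.lt_apply_or_lt_inv_apply {α : Type*} [LinearOrder α] {g : Equiv.Perm α}
    (hg : StrictMono g) {b : α} (hb : g b ≠ b) : b < g b ∨ b < g⁻¹ b :=
  hb.lt_or_gt.symm.imp_right fun h => hg.lt_iff_lt.1 (by simpa using h)

theorem nested_supports_yield_crossed_supports_general
    (H : Subgroup (Equiv.Perm ℝ)) (hH : ∀ h ∈ H, InGTilde h)
    (f g : Equiv.Perm ℝ) (hfH : f ∈ H) (hgH : g ∈ H)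
    (a b b' : ℝ) (hab : a < b) (hbb' : b < b')
    (hfa : f a = a) (hga : g a = a) (hfb : f b = b)
    (hsf : Set.Ioo a b ⊆ {x : ℝ | f x ≠ x})
    (hsg : Set.Ioo a b' ⊆ {x : ℝ | g x ≠ x}) :
    ∃ f₁ ∈ H, ∃ g₁ ∈ H, ∃ b₁ c₁ : ℝ, b₁ < c₁ ∧
      g₁ b₁ = b₁ ∧ f₁ c₁ = c₁ ∧
      Set.Ioc b₁ c₁ ⊆ {x : ℝ | g₁ x ≠ x} ∧
      Set.Ico b₁ c₁ ⊆ {x : ℝ | f₁ x ≠ x} := by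
  obtain ⟨γ, hγH, hγa, hbγ⟩ : ∃ γ ∈ H, γ a = a ∧ b < γ b :=
    (Equiv.Perm.lt_apply_or_lt_inv_apply (hH g hgH).1 (hsg ⟨hab, hbb'⟩)).elim (⟨g, hgH, hga, ·⟩)
      (⟨g⁻¹, H.inv_mem hgH, by rw [Equiv.Perm.inv_eq_iff_eq, hga], ·⟩)
  have hγ := (hH γ hγH).1
  obtain ⟨x₀, hγx₀⟩ := γ.surjective b
  have hax₀ : a < x₀ := by rw [← hγ.lt_iff_lt, hγa, hγx₀]; exact hab
  have hx₀b : x₀ < b := by rw [← hγ.lt_iff_lt, hγx₀]; exact hbγ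
  set c := f⁻¹ * γ⁻¹ * f * γ
  have hcH : c ∈ H := H.mul_mem (H.mul_mem (H.mul_mem (H.inv_mem hfH) (H.inv_mem hγH)) hfH) hγH
  have hcx₀ : c x₀ ≠ x₀ := by
    intro h
    simp only [c, Equiv.Perm.mul_apply, hγx₀, hfb, Equiv.Perm.inv_eq_iff_eq] at h
    rw [← hγx₀] at h
    exact hsf ⟨hax₀, hx₀b⟩ (γ.injective h).symm
  obtain ⟨q, hcomm, hq⟩ := (((hH f hfH).eventually_comm_nhdsGT (hH γ hγH) hfa hγa).and
    (Ioo_mem_nhdsGT hax₀)).exists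
  obtain ⟨b₁, ⟨hqb₁, hb₁x₀⟩, hcb₁, hc⟩ := exists_fixed_mem_Ico_forall_Ioc_ne
    (hH c hcH).continuous (by simp [c, hcomm]) hq.2.le hcx₀
  refine ⟨γ⁻¹ * f * γ, H.mul_mem (H.mul_mem (H.inv_mem hγH) hfH) hγH, c, hcH, b₁, x₀, hb₁x₀,
    hcb₁, by simp only [Equiv.Perm.mul_apply, hγx₀, hfb, Equiv.Perm.inv_eq_iff_eq], hc,
    fun y hy hfy => hsf (show γ y ∈ Set.Ioo a b from ?_) ?_⟩
  · rw [← hγa, ← hγx₀]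
    exact ⟨hγ (hq.1.trans_le (hqb₁.trans hy.1)), hγ hy.2⟩
  · rwa [Equiv.Perm.mul_apply, Equiv.Perm.mul_apply, Equiv.Perm.inv_eq_iff_eq] at hfy

/-- If a subgroup `H` of `G̃` contains `f`, `g` and reals `a < b < b'` with
`f(a) = g(a) = a`, `f(b) = b`, `g(b') = b'`, `(a, b) ⊆ supp f`, `(a, b') ⊆ supp g`,
then `H` contains elements `f₁, g₁` and reals `b₁ < c₁` with `g₁(b₁) = b₁`,
`f₁(c₁) = c₁`, `(b₁, c₁] ⊆ supp g₁` and `[b₁, c₁) ⊆ supp f₁`. -/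
theorem nested_supports_yield_crossed_supports
    (H : Subgroup (Equiv.Perm ℝ)) (hH : ∀ h ∈ H, InGTilde h)
    (f g : Equiv.Perm ℝ) (hfH : f ∈ H) (hgH : g ∈ H)
    (a b b' : ℝ) (hab : a < b) (hbb' : b < b')
    (hfa : f a = a) (hga : g a = a) (hfb : f b = b) (hgb' : g b' = b')
    (hsf : Set.Ioo a b ⊆ {x : ℝ | f x ≠ x})
    (hsg : Set.Ioo a b' ⊆ {x : ℝ | g x ≠ x}) :
    ∃ f₁ ∈ H, ∃ g₁ ∈ H, ∃ b₁ c₁ : ℝ, b₁ < c₁ ∧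
      g₁ b₁ = b₁ ∧ f₁ c₁ = c₁ ∧
      Set.Ioc b₁ c₁ ⊆ {x : ℝ | g₁ x ≠ x} ∧
      Set.Ico b₁ c₁ ⊆ {x : ℝ | f₁ x ≠ x} :=
  nested_supports_yield_crossed_supports_general H hH f g hfH hgH a b b' hab hbb' hfa hga hfb hsf
    hsg

end
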